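/- arXiv:2409.13660 — 3 statements merged into one kernel-verified Lean document; each statement's English description precedes it below -/
import Mathlib

section
/- Let θ be an irrational real number, and set A(θ) = [[e^{-iθπ/2}, 0], [0, e^{iθπ/2}]] and B(θ) = [[cos(θπ/2), i·sin(θπ/2)], [i·sin(θπ/2), cos(θπ/2)]], which are elements of the special unitary group SU(2). Then the subgroup of SU(2) generated by {A(θ), B(θ)} is dense in SU(2). -/
open Matrix Real

/-- The diagonal matrix `A(θ) = [[e^{-iθπ/2}, 0], [0, e^{iθπ/2}]]`. -/
noncomputable def Amat (θ : ℝ) : Matrix (Fin 2) (Fin 2) ℂ :=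
  !![Complex.exp (-(Complex.I * (θ * Real.pi / 2))), 0;
     0, Complex.exp (Complex.I * (θ * Real.pi / 2))]

/-- The matrix `B(θ) = [[cos(θπ/2), i·sin(θπ/2)], [i·sin(θπ/2), cos(θπ/2)]]`. -/
noncomputable def Bmat (θ : ℝ) : Matrix (Fin 2) (Fin 2) ℂ :=
  !![(Real.cos (θ * Real.pi / 2) : ℂ), Complex.I * (Real.sin (θ * Real.pi / 2) : ℂ);
     Complex.I * (Real.sin (θ * Real.pi / 2) : ℂ), (Real.cos (θ * Real.pi / 2) : ℂ)]

/-- The group structure on `SU(2)`: the inverse of a special unitary matrix is its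
conjugate transpose. -/
noncomputable instance SU2.instGroup : Group ↥(Matrix.specialUnitaryGroup (Fin 2) ℂ) :=
  { (inferInstance : Monoid ↥(Matrix.specialUnitaryGroup (Fin 2) ℂ)) with
    inv := fun M => ⟨star M.1,
      Matrix.mem_specialUnitaryGroup_iff.2
        ⟨Unitary.star_mem M.2.1, by
          have hdet : (M.1 : Matrix (Fin 2) (Fin 2) ℂ).det = 1 := M.2.2
          rw [Matrix.star_eq_conjTranspose, Matrix.det_conjTranspose, hdet, star_one]⟩⟩
    inv_mul_cancel := fun M => Subtype.ext M.2.1.1 }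

namespace SU2aux

noncomputable def Dmat (α : ℝ) : Matrix (Fin 2) (Fin 2) ℂ :=
  !![Complex.exp (-(Complex.I * (α : ℂ))), 0; 0, Complex.exp (Complex.I * (α : ℂ))]

noncomputable def Rmat (β : ℝ) : Matrix (Fin 2) (Fin 2) ℂ :=
  !![(Real.cos β : ℂ), Complex.I * (Real.sin β : ℂ);
     Complex.I * (Real.sin β : ℂ), (Real.cos β : ℂ)]

lemma conj_exp_I (x : ℝ) :
    (starRingEnd ℂ) (Complex.exp (Complex.I * (x : ℂ))) = Complex.exp (-(Complex.I * x)) := by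
  rw [← Complex.exp_conj]
  simp [Complex.conj_I, mul_comm]

lemma exp_I_mul_neg (x : ℝ) :
    Complex.exp (Complex.I * (x:ℂ)) * Complex.exp (-(Complex.I * x)) = 1 := by
  rw [← Complex.exp_add]; simp

lemma Dmat_mem (α : ℝ) : Dmat α ∈ Matrix.specialUnitaryGroup (Fin 2) ℂ := by
  rw [Matrix.mem_specialUnitaryGroup_iff]
  constructor
  · rw [Matrix.mem_unitaryGroup_iff]
    ext i j
    fin_cases i <;> fin_cases j <;>
      simp [Dmat, Matrix.mul_apply, Fin.sum_univ_two, Matrix.one_apply, conj_exp_I,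
        Matrix.conjTranspose_apply, ← Complex.exp_conj, Complex.conj_I, exp_I_mul_neg,
        ← Complex.exp_add] <;> ring_nf <;> simp [mul_comm]
  · simp [Dmat, Matrix.det_fin_two_of, ← Complex.exp_add]

lemma Rmat_mem (β : ℝ) : Rmat β ∈ Matrix.specialUnitaryGroup (Fin 2) ℂ := by
  have hc : ((Real.cos β : ℂ))^2 + ((Real.sin β : ℂ))^2 = 1 := by
    have := Real.sin_sq_add_cos_sq β
    rw [← Complex.ofReal_pow, ← Complex.ofReal_pow, ← Complex.ofReal_add]
    norm_cast
    linarith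
  rw [Matrix.mem_specialUnitaryGroup_iff]
  constructor
  · rw [Matrix.mem_unitaryGroup_iff]
    ext i j
    fin_cases i <;> fin_cases j <;>
      simp [Rmat, Matrix.mul_apply, Fin.sum_univ_two, Matrix.one_apply,
        Matrix.conjTranspose_apply, Complex.conj_I, Complex.ext_iff,
        Complex.cos_ofReal_re, Complex.sin_ofReal_re] <;> ring_nf <;>
      simp [Complex.cos_ofReal_re, Complex.sin_ofReal_re] <;>
      nlinarith [Real.sin_sq_add_cos_sq β]
  · simp only [Rmat, Matrix.det_fin_two_of]
    have : (Complex.I * (Real.sin β : ℂ)) * (Complex.I * (Real.sin β : ℂ)) =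
        -((Real.sin β : ℂ)^2) := by rw [show (Complex.I * (Real.sin β : ℂ)) * (Complex.I * (Real.sin β : ℂ)) = Complex.I^2 * (Real.sin β : ℂ)^2 from by ring, Complex.I_sq]; ring
    rw [this]
    have hc : ((Real.cos β : ℂ))^2 + ((Real.sin β : ℂ))^2 = 1 := by
      have := Real.sin_sq_add_cos_sq β
      rw [← Complex.ofReal_pow, ← Complex.ofReal_pow, ← Complex.ofReal_add]
      norm_cast
      linarith
    linear_combination hc


abbrev SU2 := ↥(Matrix.specialUnitaryGroup (Fin 2) ℂ)

lemma Dmat_mul (a b : ℝ) : Dmat a * Dmat b = Dmat (a + b) := by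
  ext i j
  fin_cases i <;> fin_cases j <;>
    simp [Dmat, Matrix.mul_apply, Fin.sum_univ_two, ← Complex.exp_add] <;>
    (congr 1; push_cast; ring)

lemma Rmat_mul (a b : ℝ) : Rmat a * Rmat b = Rmat (a + b) := by
  have h2 : (Complex.I : ℂ) * Complex.I = -1 := Complex.I_mul_I
  ext i j
  fin_cases i <;> fin_cases j <;>
    simp [Rmat, Matrix.mul_apply, Fin.sum_univ_two, Complex.ofReal_add, Complex.cos_add,
      Complex.sin_add] <;> ring_nf <;> simp [Complex.I_sq] <;> try ring

lemma Dmat_zero : Dmat 0 = 1 := by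
  ext i j
  fin_cases i <;> fin_cases j <;> simp [Dmat, Matrix.one_apply]

lemma Rmat_zero : Rmat 0 = 1 := by
  ext i j
  fin_cases i <;> fin_cases j <;> simp [Rmat, Matrix.one_apply]

lemma Dmat_two_pi : Dmat (2 * Real.pi) = 1 := by
  ext i j
  have h1 : Complex.exp (Complex.I * (2 * (Real.pi : ℂ))) = 1 := by
    rw [mul_comm]; simpa using Complex.exp_two_pi_mul_I
  have h2 : Complex.exp (-(Complex.I * (2 * (Real.pi : ℂ)))) = 1 := by
    rw [Complex.exp_neg, h1, inv_one]
  fin_cases i <;> fin_cases j <;> simp [Dmat, Matrix.one_apply, h1, h2]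

lemma Rmat_two_pi : Rmat (2 * Real.pi) = 1 := by
  ext i j
  fin_cases i <;> fin_cases j <;>
    simp [Rmat, Matrix.one_apply, Real.cos_two_pi, Real.sin_two_pi]

noncomputable def Dsu (a : ℝ) : SU2 := ⟨Dmat a, Dmat_mem a⟩
noncomputable def Rsu (a : ℝ) : SU2 := ⟨Rmat a, Rmat_mem a⟩

lemma Dsu_mul (a b : ℝ) : Dsu a * Dsu b = Dsu (a + b) := Subtype.ext (Dmat_mul a b)
lemma Rsu_mul (a b : ℝ) : Rsu a * Rsu b = Rsu (a + b) := Subtype.ext (Rmat_mul a b)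
lemma Dsu_zero : Dsu 0 = 1 := Subtype.ext Dmat_zero
lemma Rsu_zero : Rsu 0 = 1 := Subtype.ext Rmat_zero

lemma Dsu_neg (a : ℝ) : Dsu (-a) = (Dsu a)⁻¹ :=
  eq_inv_of_mul_eq_one_left (by rw [Dsu_mul, neg_add_cancel, Dsu_zero])
lemma Rsu_neg (a : ℝ) : Rsu (-a) = (Rsu a)⁻¹ :=
  eq_inv_of_mul_eq_one_left (by rw [Rsu_mul, neg_add_cancel, Rsu_zero])

lemma Dsu_continuous : Continuous Dsu := by
  apply Continuous.subtype_mk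
  apply continuous_matrix
  intro i j
  fin_cases i <;> fin_cases j <;> simp [Dmat] <;> fun_prop

lemma Rsu_continuous : Continuous Rsu := by
  apply Continuous.subtype_mk
  apply continuous_matrix
  intro i j
  fin_cases i <;> fin_cases j <;> simp [Rmat] <;> fun_prop


lemma DRD (α β γ : ℝ) : Dmat α * Rmat β * Dmat γ =
    !![(Real.cos β : ℂ) * Complex.exp (-(Complex.I * ((α : ℂ) + (γ : ℂ)))),
       Complex.I * (Real.sin β : ℂ) * Complex.exp (-(Complex.I * ((α : ℂ) - (γ : ℂ))));
       Complex.I * (Real.sin β : ℂ) * Complex.exp (Complex.I * ((α : ℂ) - (γ : ℂ))),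
       (Real.cos β : ℂ) * Complex.exp (Complex.I * ((α : ℂ) + (γ : ℂ)))] := by
  have e1 : Complex.exp (-(Complex.I * (α : ℂ))) * Complex.exp (-(Complex.I * (γ : ℂ))) =
      Complex.exp (-(Complex.I * ((α : ℂ) + (γ : ℂ)))) := by
    rw [← Complex.exp_add]; congr 1; ring
  have e2 : Complex.exp (-(Complex.I * (α : ℂ))) * Complex.exp (Complex.I * (γ : ℂ)) =
      Complex.exp (-(Complex.I * ((α : ℂ) - (γ : ℂ)))) := by
    rw [← Complex.exp_add]; congr 1; ring
  have e3 : Complex.exp (Complex.I * (α : ℂ)) * Complex.exp (-(Complex.I * (γ : ℂ))) =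
      Complex.exp (Complex.I * ((α : ℂ) - (γ : ℂ))) := by
    rw [← Complex.exp_add]; congr 1; ring
  have e4 : Complex.exp (Complex.I * (α : ℂ)) * Complex.exp (Complex.I * (γ : ℂ)) =
      Complex.exp (Complex.I * ((α : ℂ) + (γ : ℂ))) := by
    rw [← Complex.exp_add]; congr 1; ring
  ext i j
  fin_cases i <;> fin_cases j <;>
    simp only [Dmat, Rmat, Matrix.mul_apply, Fin.sum_univ_two, Matrix.cons_val', Fin.zero_eta,
      Fin.mk_one, Matrix.cons_val_zero, Matrix.cons_val_one, Matrix.head_cons, Matrix.empty_val',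
      Matrix.cons_val_fin_one, Matrix.head_fin_const, Matrix.of_apply, Fin.isValue]
  · linear_combination ((Real.cos β : ℂ)) * e1
  · linear_combination (Complex.I * (Real.sin β : ℂ)) * e2
  · linear_combination (Complex.I * (Real.sin β : ℂ)) * e3
  · linear_combination ((Real.cos β : ℂ)) * e4

lemma conj_exp_mul_I (x : ℝ) :
    (starRingEnd ℂ) (Complex.exp ((x : ℂ) * Complex.I)) = Complex.exp (-((x : ℂ) * Complex.I)) := by
  rw [← Complex.exp_conj]; congr 1
  simp [Complex.conj_I]

lemma euler (M : Matrix (Fin 2) (Fin 2) ℂ) (hM : M ∈ Matrix.specialUnitaryGroup (Fin 2) ℂ) :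
    ∃ α β γ : ℝ, M = Dmat α * Rmat β * Dmat γ := by
  obtain ⟨hU, hdet⟩ := Matrix.mem_specialUnitaryGroup_iff.1 hM
  have hsM : star M * M = 1 := hU.1
  have hadj : star M = M.adjugate := by
    have h1 : M * M.adjugate = 1 := by rw [Matrix.mul_adjugate, hdet, one_smul]
    calc star M = star M * (M * M.adjugate) := by rw [h1, mul_one]
    _ = (star M * M) * M.adjugate := by rw [mul_assoc]
    _ = M.adjugate := by rw [hsM, one_mul]
  have hadj2 := Matrix.adjugate_fin_two M
  have h11 : M 1 1 = (starRingEnd ℂ) (M 0 0) := by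
    have := congrFun (congrFun hadj 0) 0
    rw [hadj2] at this
    simpa [Matrix.conjTranspose_apply] using this.symm
  have h10 : M 1 0 = -((starRingEnd ℂ) (M 0 1)) := by
    have h := congrFun (congrFun hadj 0) 1
    rw [hadj2] at h
    simp only [Matrix.conjTranspose_apply, Matrix.star_apply] at h
    have h2 := congrArg (starRingEnd ℂ) h
    simpa using h2
  have hnorm : Complex.normSq (M 0 0) + Complex.normSq (M 0 1) = 1 := by
    rw [Matrix.det_fin_two, h11, h10] at hdet
    have : (((Complex.normSq (M 0 0) + Complex.normSq (M 0 1) : ℝ)) : ℂ) = 1 := by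
      rw [Complex.ofReal_add, Complex.normSq_eq_conj_mul_self, Complex.normSq_eq_conj_mul_self]
      rw [← hdet]; ring
    exact_mod_cast this
  set r := ‖M 0 0‖ with hr_def
  set s := ‖M 0 1‖ with hs_def
  have hrs : r ^ 2 + s ^ 2 = 1 := by
    rw [hr_def, hs_def, Complex.sq_norm, Complex.sq_norm]; exact hnorm
  have hs0 : 0 ≤ s := norm_nonneg _
  have hr0 : 0 ≤ r := norm_nonneg _
  have hs1 : s ≤ 1 := by nlinarith
  set β := Real.arcsin s with hβ_def
  have hsinβ : Real.sin β = s := Real.sin_arcsin (by linarith) hs1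
  have hcosβ : Real.cos β = r := by
    rw [hβ_def, Real.cos_arcsin]
    have h12 : 1 - s ^ 2 = r ^ 2 := by linarith
    rw [h12, Real.sqrt_sq hr0]
  set φ := Complex.arg (M 0 0) with hφ_def
  set ψ := Complex.arg (-Complex.I * (M 0 1)) with hψ_def
  have ha : M 0 0 = (r : ℂ) * Complex.exp ((φ : ℂ) * Complex.I) :=
    (Complex.norm_mul_exp_arg_mul_I (M 0 0)).symm
  have hb : M 0 1 = Complex.I * ((s : ℂ) * Complex.exp ((ψ : ℂ) * Complex.I)) := by
    have h := Complex.norm_mul_exp_arg_mul_I (-Complex.I * (M 0 1))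
    have habs : ‖-Complex.I * (M 0 1)‖ = s := by
      simp [hs_def]
    rw [habs, ← hψ_def] at h
    have h2 := congrArg (fun z => Complex.I * z) h
    simpa [← mul_assoc, Complex.I_mul_I] using h2.symm
  refine ⟨-(φ + ψ) / 2, β, (ψ - φ) / 2, ?_⟩
  rw [DRD]
  have hαγ : ((-(φ + ψ) / 2 : ℝ) : ℂ) + (((ψ - φ) / 2 : ℝ) : ℂ) = -(φ : ℂ) := by
    push_cast; ring
  have hαγ' : ((-(φ + ψ) / 2 : ℝ) : ℂ) - (((ψ - φ) / 2 : ℝ) : ℂ) = -(ψ : ℂ) := by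
    push_cast; ring
  rw [hαγ, hαγ', hcosβ, hsinβ]
  have E1 : Complex.exp (-(Complex.I * -(φ : ℂ))) = Complex.exp ((φ : ℂ) * Complex.I) := by
    congr 1; ring
  have E2 : Complex.exp (-(Complex.I * -(ψ : ℂ))) = Complex.exp ((ψ : ℂ) * Complex.I) := by
    congr 1; ring
  have E3 : Complex.exp (Complex.I * -(ψ : ℂ)) = Complex.exp (-((ψ : ℂ) * Complex.I)) := by
    congr 1; ring
  have E4 : Complex.exp (Complex.I * -(φ : ℂ)) = Complex.exp (-((φ : ℂ) * Complex.I)) := by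
    congr 1; ring
  rw [E1, E2, E3, E4]
  ext i j
  fin_cases i <;> fin_cases j <;>
    simp only [Matrix.cons_val', Fin.zero_eta, Fin.mk_one, Matrix.cons_val_zero,
      Matrix.cons_val_one, Matrix.head_cons, Matrix.empty_val', Matrix.cons_val_fin_one,
      Matrix.head_fin_const, Matrix.of_apply, Fin.isValue]
  · rw [ha]
  · rw [hb]; ring
  · rw [h10, hb]
    simp only [_root_.map_mul, Complex.conj_I, Complex.conj_ofReal, conj_exp_mul_I]
    ring
  · rw [h11, ha]
    simp only [_root_.map_mul, Complex.conj_ofReal, conj_exp_mul_I]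
    try ring


lemma dense_real (θ : ℝ) (hθ : Irrational θ) :
    Dense ((AddSubgroup.closure {θ * Real.pi / 2, 2 * Real.pi} : AddSubgroup ℝ) : Set ℝ) := by
  rcases AddSubgroup.dense_or_cyclic (AddSubgroup.closure {θ * Real.pi / 2, 2 * Real.pi}) with
    h | ⟨a, ha⟩
  · exact h
  · exfalso
    have h1 : θ * Real.pi / 2 ∈ AddSubgroup.closure ({θ * Real.pi / 2, 2 * Real.pi} : Set ℝ) :=
      AddSubgroup.subset_closure (by simp)
    have h2 : 2 * Real.pi ∈ AddSubgroup.closure ({θ * Real.pi / 2, 2 * Real.pi} : Set ℝ) :=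
      AddSubgroup.subset_closure (by simp)
    rw [ha, AddSubgroup.mem_closure_singleton] at h1 h2
    obtain ⟨m, hm⟩ := h1
    obtain ⟨n, hn⟩ := h2
    rw [zsmul_eq_mul] at hm hn
    have hπ : (Real.pi : ℝ) ≠ 0 := Real.pi_ne_zero
    have hn0 : (n : ℝ) ≠ 0 := by
      intro h
      rw [h, zero_mul] at hn
      have := Real.pi_pos
      linarith
    have key : θ * n * Real.pi = 4 * m * Real.pi := by
      linear_combination 2 * (m : ℝ) * hn - (2 * (n : ℝ)) * hm
    have key2 : θ * n = 4 * m := by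
      have := mul_right_cancel₀ hπ key
      linarith [this]
    apply hθ
    refine ⟨(4 * m : ℚ) / (n : ℚ), ?_⟩
    have hnq : ((n : ℚ) : ℝ) ≠ 0 := by exact_mod_cast hn0
    push_cast
    rw [div_eq_iff (by exact_mod_cast hn0)]
    push_cast
    linarith [key2]

end SU2aux

open SU2aux in
/-- For irrational `θ`, the matrices `A(θ)` and `B(θ)` lie in `SU(2)` and the subgroup
they generate is dense in `SU(2)`. -/
theorem dense_subgroup_of_irrational (θ : ℝ) (hθ : Irrational θ) :
    ∃ (hA : Amat θ ∈ Matrix.specialUnitaryGroup (Fin 2) ℂ)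
      (hB : Bmat θ ∈ Matrix.specialUnitaryGroup (Fin 2) ℂ),
      Dense ((Subgroup.closure
        ({⟨Amat θ, hA⟩, ⟨Bmat θ, hB⟩} : Set ↥(Matrix.specialUnitaryGroup (Fin 2) ℂ)) :
        Subgroup ↥(Matrix.specialUnitaryGroup (Fin 2) ℂ)) :
        Set ↥(Matrix.specialUnitaryGroup (Fin 2) ℂ)) := by
  have hAe : Amat θ = Dmat (θ * Real.pi / 2) := by
    simp only [Amat, Dmat, Complex.ofReal_mul, Complex.ofReal_div, Complex.ofReal_ofNat]
  have hBe : Bmat θ = Rmat (θ * Real.pi / 2) := rfl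
  have hA : Amat θ ∈ Matrix.specialUnitaryGroup (Fin 2) ℂ := by rw [hAe]; exact Dmat_mem _
  have hB : Bmat θ ∈ Matrix.specialUnitaryGroup (Fin 2) ℂ := by rw [hBe]; exact Rmat_mem _
  refine ⟨hA, hB, ?_⟩
  set H : Subgroup SU2 := Subgroup.closure {⟨Amat θ, hA⟩, ⟨Bmat θ, hB⟩} with hH
  have hAH : Dsu (θ * Real.pi / 2) ∈ H := by
    have : (⟨Amat θ, hA⟩ : SU2) = Dsu (θ * Real.pi / 2) := Subtype.ext hAe
    rw [← this]
    exact Subgroup.subset_closure (by simp)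
  have hBH : Rsu (θ * Real.pi / 2) ∈ H := by
    have : (⟨Bmat θ, hB⟩ : SU2) = Rsu (θ * Real.pi / 2) := Subtype.ext hBe
    rw [← this]
    exact Subgroup.subset_closure (by simp)
  have hdense := dense_real θ hθ
  set S : AddSubgroup ℝ := AddSubgroup.closure {θ * Real.pi / 2, 2 * Real.pi} with hS
  have hmapsD : ∀ x ∈ S, Dsu x ∈ H := by
    intro x hx
    induction hx using AddSubgroup.closure_induction with
    | mem y hy =>
      rcases hy with hy | hy
      · rw [hy]; exact hAH
      · rw [hy]
        have : Dsu (2 * Real.pi) = 1 := Subtype.ext Dmat_two_pi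
        rw [this]; exact one_mem H
    | zero => -- zero case
      have : Dsu 0 = 1 := Dsu_zero
      rw [this]; exact one_mem H
    | add a b _ _ iha ihb =>
      rw [← Dsu_mul] at *
      exact mul_mem iha ihb
    | neg a _ ih =>
      rw [Dsu_neg]
      exact inv_mem ih
  have hmapsR : ∀ x ∈ S, Rsu x ∈ H := by
    intro x hx
    induction hx using AddSubgroup.closure_induction with
    | mem y hy =>
      rcases hy with hy | hy
      · rw [hy]; exact hBH
      · rw [hy]
        have : Rsu (2 * Real.pi) = 1 := Subtype.ext Rmat_two_pi
        rw [this]; exact one_mem H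
    | zero =>
      have : Rsu 0 = 1 := Rsu_zero
      rw [this]; exact one_mem H
    | add a b _ _ iha ihb =>
      rw [← Rsu_mul] at *
      exact mul_mem iha ihb
    | neg a _ ih =>
      rw [Rsu_neg]
      exact inv_mem ih
  have hDclos : ∀ a : ℝ, Dsu a ∈ closure (H : Set SU2) := fun a =>
    map_mem_closure Dsu_continuous (hdense a) (fun x hx => hmapsD x hx)
  have hRclos : ∀ a : ℝ, Rsu a ∈ closure (H : Set SU2) := fun a =>
    map_mem_closure Rsu_continuous (hdense a) (fun x hx => hmapsR x hx)
  intro x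
  obtain ⟨α, β, γ, hx⟩ := euler x.1 x.2
  have hx' : x = Dsu α * Rsu β * Dsu γ := Subtype.ext hx
  rw [hx']
  have hK : ∀ u v : SU2, u ∈ closure (H : Set SU2) → v ∈ closure (H : Set SU2) →
      u * v ∈ closure (H : Set SU2) := fun u v hu hv =>
    H.toSubmonoid.topologicalClosure.mul_mem hu hv
  exact hK _ _ (hK _ _ (hDclos α) (hRclos β)) (hDclos γ)
end

section
/- Let θ be an irrational real number, and set A(θ) = [[e^{-iθπ/2}, 0], [0, e^{iθπ/2}]] and B(θ) = [[cos(θπ/2), i·sin(θπ/2)], [i·sin(θπ/2), cos(θπ/2)]], elements of the special unitary group SU(2). Let Γ₂ be the genus-2 surface group, i.e. the presented group on four generators a₁, b₁, a₂, b₂ with the single relator [a₁,b₁]·[a₂,b₂] (where [x,y] = x·y·x⁻¹·y⁻¹). Then there exists a group homomorphism ρ : Γ₂ → SU(2) satisfying ρ(a₁) = ρ(b₁) = A(θ) and ρ(a₂) = ρ(b₂) = B(θ), and the range of ρ is dense in SU(2). -/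
open Matrix Real

/-- The single relator `[a₁,b₁]·[a₂,b₂]` of the genus-2 surface group, inside the free
group on the four generators `a₁ = 0`, `b₁ = 1`, `a₂ = 2`, `b₂ = 3`. -/
def genus2Rels : Set (FreeGroup (Fin 4)) :=
  {(FreeGroup.of 0 * FreeGroup.of 1 * (FreeGroup.of 0)⁻¹ * (FreeGroup.of 1)⁻¹) *
   (FreeGroup.of 2 * FreeGroup.of 3 * (FreeGroup.of 2)⁻¹ * (FreeGroup.of 3)⁻¹)}

/-- The genus-2 surface group `Γ₂ = ⟨a₁,b₁,a₂,b₂ ∣ [a₁,b₁]·[a₂,b₂]⟩`. -/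
def Genus2Group : Type := PresentedGroup genus2Rels

instance : Group Genus2Group := by unfold Genus2Group; infer_instance

/-! ### Auxiliary material -/

namespace Genus2Aux

/-- The diagonal one-parameter subgroup. -/
noncomputable def Dm (α : ℝ) : Matrix (Fin 2) (Fin 2) ℂ :=
  !![Complex.exp (-(Complex.I * α)), 0; 0, Complex.exp (Complex.I * α)]

/-- The anti-diagonal one-parameter subgroup. -/
noncomputable def Rm (β : ℝ) : Matrix (Fin 2) (Fin 2) ℂ :=
  !![(Real.cos β : ℂ), Complex.I * (Real.sin β : ℂ);
     Complex.I * (Real.sin β : ℂ), (Real.cos β : ℂ)]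

lemma star_fin2 (A : Matrix (Fin 2) (Fin 2) ℂ) :
    star A = !![starRingEnd ℂ (A 0 0), starRingEnd ℂ (A 1 0);
                starRingEnd ℂ (A 0 1), starRingEnd ℂ (A 1 1)] := by
  ext i j
  fin_cases i <;> fin_cases j <;>
    simp [Matrix.star_eq_conjTranspose, Matrix.conjTranspose_apply]

lemma Dm_mem (α : ℝ) : Dm α ∈ Matrix.specialUnitaryGroup (Fin 2) ℂ := by
  rw [Matrix.mem_specialUnitaryGroup_iff]
  constructor
  · rw [Matrix.mem_unitaryGroup_iff, Dm, star_fin2]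
    ext i j
    fin_cases i <;> fin_cases j <;>
      simp [Matrix.mul_fin_two, Matrix.one_fin_two, ← Complex.exp_conj,
        ← Complex.exp_add, Complex.conj_ofReal]
  · rw [Dm, Matrix.det_fin_two_of, ← Complex.exp_add]
    simp

lemma Rm_mem (β : ℝ) : Rm β ∈ Matrix.specialUnitaryGroup (Fin 2) ℂ := by
  have hcs : Complex.cos β ^ 2 + Complex.sin β ^ 2 = 1 := Complex.cos_sq_add_sin_sq β
  have hI : Complex.I ^ 2 = -1 := Complex.I_sq
  rw [Matrix.mem_specialUnitaryGroup_iff]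
  constructor
  · rw [Matrix.mem_unitaryGroup_iff, Rm, star_fin2]
    ext i j
    fin_cases i <;> fin_cases j <;>
      simp [Matrix.mul_fin_two, Matrix.one_fin_two, _root_.map_mul, Complex.conj_I,
        ← Complex.cos_conj, ← Complex.sin_conj, Complex.conj_ofReal]
    all_goals first
      | ring1
      | linear_combination hcs - (Complex.sin β) ^ 2 * hI
      | linear_combination (Complex.sin β) ^ 2 * hI - hcs
  · rw [Rm, Matrix.det_fin_two_of]
    push_cast
    linear_combination hcs - (Complex.sin β) ^ 2 * hI

lemma Dm_mul (x y : ℝ) : Dm x * Dm y = Dm (x + y) := by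
  rw [Dm, Dm, Dm, Matrix.mul_fin_two]
  ext i j
  fin_cases i <;> fin_cases j <;>
    simp [← Complex.exp_add] <;>
    (try (congr 1; push_cast; ring))

lemma Rm_mul (x y : ℝ) : Rm x * Rm y = Rm (x + y) := by
  have hI : Complex.I ^ 2 = -1 := Complex.I_sq
  rw [Rm, Rm, Rm, Matrix.mul_fin_two]
  ext i j
  fin_cases i <;> fin_cases j <;>
    push_cast <;>
    simp [Matrix.cons_val_zero, Matrix.cons_val_one, Complex.cos_add, Complex.sin_add] <;>
    first
      | ring1
      | linear_combination (Complex.sin x * Complex.sin y) * hI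
      | linear_combination -(Complex.sin x * Complex.sin y) * hI

/-- The SU(2) group. -/
noncomputable abbrev SU2 := ↥(Matrix.specialUnitaryGroup (Fin 2) ℂ)

noncomputable def dsu (α : ℝ) : SU2 := ⟨Dm α, Dm_mem α⟩

noncomputable def rsu (β : ℝ) : SU2 := ⟨Rm β, Rm_mem β⟩

lemma dsu_mul (x y : ℝ) : dsu x * dsu y = dsu (x + y) := Subtype.ext (Dm_mul x y)

lemma rsu_mul (x y : ℝ) : rsu x * rsu y = rsu (x + y) := Subtype.ext (Rm_mul x y)

/-- `dsu` as a monoid hom from `Multiplicative ℝ`. -/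
noncomputable def dsuHom : Multiplicative ℝ →* SU2 :=
  MonoidHom.mk' (fun x => dsu x.toAdd) fun a b => (dsu_mul _ _).symm

noncomputable def rsuHom : Multiplicative ℝ →* SU2 :=
  MonoidHom.mk' (fun x => rsu x.toAdd) fun a b => (rsu_mul _ _).symm

lemma dsu_zsmul (m : ℤ) (x : ℝ) : dsu (m • x) = dsu x ^ m := by
  have h := map_zpow dsuHom (Multiplicative.ofAdd x) m
  simp only [dsuHom, MonoidHom.mk'_apply,
     toAdd_zpow, toAdd_ofAdd] at h
  exact h

lemma rsu_zsmul (m : ℤ) (x : ℝ) : rsu (m • x) = rsu x ^ m := by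
  have h := map_zpow rsuHom (Multiplicative.ofAdd x) m
  simp only [rsuHom, MonoidHom.mk'_apply,
     toAdd_zpow, toAdd_ofAdd] at h
  exact h

lemma dsu_two_pi : dsu (2 * Real.pi) = 1 := by
  apply Subtype.ext
  show Dm (2 * Real.pi) = 1
  rw [Dm, Matrix.one_fin_two]
  have h1 : Complex.exp (Complex.I * (2 * (Real.pi : ℂ))) = 1 := by
    rw [mul_comm]
    simpa using Complex.exp_int_mul_two_pi_mul_I 1
  have h2 : Complex.exp (-(Complex.I * (2 * (Real.pi : ℂ)))) = 1 := by
    rw [Complex.exp_neg, h1, inv_one]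
  push_cast
  rw [h1, h2]

lemma rsu_two_pi : rsu (2 * Real.pi) = 1 := by
  apply Subtype.ext
  show Rm (2 * Real.pi) = 1
  rw [Rm, Matrix.one_fin_two, Real.cos_two_pi, Real.sin_two_pi]
  norm_num

lemma continuous_dsu : Continuous dsu := by
  apply Continuous.subtype_mk
  show Continuous Dm
  apply continuous_matrix
  intro i j
  unfold Dm
  fin_cases i <;> fin_cases j <;> simp <;> fun_prop

lemma continuous_rsu : Continuous rsu := by
  apply Continuous.subtype_mk
  show Continuous Rm
  apply continuous_matrix
  intro i j
  unfold Rm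
  fin_cases i <;> fin_cases j <;> simp <;> fun_prop

/-- For irrational `θ`, the subgroup `ℤ·(θπ/2) + ℤ·(2π)` is dense in `ℝ`. -/
lemma dense_aux {θ : ℝ} (hθ : Irrational θ) :
    Dense (AddSubgroup.closure {θ * Real.pi / 2, 2 * Real.pi} : Set ℝ) := by
  rcases AddSubgroup.dense_or_cyclic (AddSubgroup.closure {θ * Real.pi / 2, 2 * Real.pi})
    with h | ⟨a, ha⟩
  · exact h
  · exfalso
    have hc : θ * Real.pi / 2 ∈ AddSubgroup.closure {θ * Real.pi / 2, 2 * Real.pi} :=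
      AddSubgroup.subset_closure (by simp)
    have hp : 2 * Real.pi ∈ AddSubgroup.closure {θ * Real.pi / 2, 2 * Real.pi} :=
      AddSubgroup.subset_closure (by simp)
    rw [ha, AddSubgroup.mem_closure_singleton] at hc hp
    obtain ⟨m, hm⟩ := hc
    obtain ⟨n, hn⟩ := hp
    rw [zsmul_eq_mul] at hm hn
    have hπ : (0:ℝ) < Real.pi := Real.pi_pos
    have ha0 : a ≠ 0 := by
      rintro rfl
      rw [mul_zero] at hn
      linarith
    have hn0 : ((n:ℝ)) ≠ 0 := by
      intro h
      rw [h, zero_mul] at hn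
      linarith
    have e1 : θ * ((n:ℝ) * a) = θ * (2 * Real.pi) := by rw [hn]
    have e2 : 4 * ((m:ℝ) * a) = 4 * (θ * Real.pi / 2) := by rw [hm]
    have key : θ * (n:ℝ) * a = 4 * (m:ℝ) * a := by linarith
    have hcancel : θ * (n:ℝ) = 4 * (m:ℝ) := mul_right_cancel₀ ha0 key
    have : θ = ((4 * m / n : ℚ) : ℝ) := by
      push_cast
      rw [eq_div_iff hn0]
      linarith
    exact hθ ⟨4 * m / n, this.symm⟩

lemma abs_mul_exp_neg_arg_mul_I (z : ℂ) :
    (‖z‖ : ℂ) * Complex.exp (-(z.arg : ℂ) * Complex.I) = starRingEnd ℂ z := by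
  have h := congrArg (starRingEnd ℂ) (Complex.norm_mul_exp_arg_mul_I z)
  rwa [_root_.map_mul, Complex.conj_ofReal, ← Complex.exp_conj, _root_.map_mul,
    Complex.conj_ofReal, Complex.conj_I, mul_neg, ← neg_mul] at h

lemma exp_pi_div_two_mul_I : Complex.exp ((Real.pi / 2 : ℝ) * Complex.I) = Complex.I := by
  rw [Complex.exp_mul_I, ← Complex.ofReal_cos, ← Complex.ofReal_sin,
    Real.cos_pi_div_two, Real.sin_pi_div_two]
  simp

lemma entry_dd (r x y t : ℝ) (h : x + y = -t) :
    Complex.exp (-(Complex.I * x)) * (r:ℂ) * Complex.exp (-(Complex.I * y)) =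
      (r:ℂ) * Complex.exp ((t:ℂ) * Complex.I) := by
  have h' : (x:ℂ) + (y:ℂ) = -(t:ℂ) := by exact_mod_cast h
  calc Complex.exp (-(Complex.I * x)) * (r:ℂ) * Complex.exp (-(Complex.I * y))
      = (r:ℂ) * Complex.exp (-(Complex.I * x) + -(Complex.I * y)) := by
        rw [Complex.exp_add]; ring
    _ = (r:ℂ) * Complex.exp ((t:ℂ) * Complex.I) := by
        rw [show -(Complex.I * (x:ℂ)) + -(Complex.I * (y:ℂ)) = (t:ℂ) * Complex.I from by
          linear_combination -Complex.I * h']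

lemma entry_dd' (r x y t : ℝ) (h : x + y = -t) :
    Complex.exp (Complex.I * x) * (r:ℂ) * Complex.exp (Complex.I * y) =
      (r:ℂ) * Complex.exp (-(t:ℂ) * Complex.I) := by
  have h' : (x:ℂ) + (y:ℂ) = -(t:ℂ) := by exact_mod_cast h
  calc Complex.exp (Complex.I * x) * (r:ℂ) * Complex.exp (Complex.I * y)
      = (r:ℂ) * Complex.exp (Complex.I * x + Complex.I * y) := by
        rw [Complex.exp_add]; ring
    _ = (r:ℂ) * Complex.exp (-(t:ℂ) * Complex.I) := by
        rw [show Complex.I * (x:ℂ) + Complex.I * (y:ℂ) = -(t:ℂ) * Complex.I from by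
          linear_combination Complex.I * h']

lemma entry_dr (r x y t : ℝ) (h : y - x = t - Real.pi/2) :
    Complex.exp (-(Complex.I * x)) * (Complex.I * (r:ℂ)) * Complex.exp (Complex.I * y) =
      (r:ℂ) * Complex.exp ((t:ℂ) * Complex.I) := by
  have h' : (y:ℂ) - (x:ℂ) = (t:ℂ) - ((Real.pi/2 : ℝ) : ℂ) := by exact_mod_cast h
  have key : Complex.exp (-(Complex.I*x) + Complex.I*y) =
      Complex.exp ((t:ℂ)*Complex.I) * (Complex.I)⁻¹ := by
    have hmini : Complex.exp (-(((Real.pi/2 : ℝ) : ℂ) * Complex.I)) = (Complex.I)⁻¹ := by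
      rw [Complex.exp_neg, exp_pi_div_two_mul_I]
    rw [show -(Complex.I*(x:ℂ)) + Complex.I*(y:ℂ)
        = (t:ℂ) * Complex.I + -(((Real.pi/2 : ℝ) : ℂ) * Complex.I) from by
        linear_combination Complex.I * h',
      Complex.exp_add, hmini]
  calc Complex.exp (-(Complex.I * x)) * (Complex.I * (r:ℂ)) * Complex.exp (Complex.I * y)
      = (r:ℂ) * Complex.I * Complex.exp (-(Complex.I*x) + Complex.I*y) := by
        rw [Complex.exp_add]; ring
    _ = (r:ℂ) * Complex.exp ((t:ℂ)*Complex.I) * (Complex.I * (Complex.I)⁻¹) := by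
        rw [key]; ring
    _ = (r:ℂ) * Complex.exp ((t:ℂ) * Complex.I) := by
        rw [mul_inv_cancel₀ Complex.I_ne_zero, mul_one]

lemma entry_rd (r x y t : ℝ) (h : x - y = Real.pi/2 - t) :
    Complex.exp (Complex.I * x) * (Complex.I * (r:ℂ)) * Complex.exp (-(Complex.I * y)) =
      -((r:ℂ) * Complex.exp (-(t:ℂ) * Complex.I)) := by
  have h' : (x:ℂ) - (y:ℂ) = ((Real.pi/2 : ℝ) : ℂ) - (t:ℂ) := by exact_mod_cast h
  have key : Complex.exp (Complex.I*x + -(Complex.I*y)) =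
      Complex.exp (-(t:ℂ)*Complex.I) * Complex.I := by
    rw [show Complex.I*(x:ℂ) + -(Complex.I*(y:ℂ))
        = -(t:ℂ) * Complex.I + ((Real.pi/2 : ℝ) : ℂ) * Complex.I from by
        linear_combination Complex.I * h',
      Complex.exp_add, exp_pi_div_two_mul_I]
  calc Complex.exp (Complex.I * x) * (Complex.I * (r:ℂ)) * Complex.exp (-(Complex.I * y))
      = (r:ℂ) * Complex.I * Complex.exp (Complex.I*x + -(Complex.I*y)) := by
        rw [Complex.exp_add]; ring
    _ = (r:ℂ) * Complex.exp (-(t:ℂ)*Complex.I) * (Complex.I * Complex.I) := by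
        rw [key]; ring
    _ = -((r:ℂ) * Complex.exp (-(t:ℂ) * Complex.I)) := by
        rw [Complex.I_mul_I]; ring

/-- Euler-angle decomposition of an `SU(2)` matrix. -/
lemma euler (M : Matrix (Fin 2) (Fin 2) ℂ) (hM : M ∈ Matrix.specialUnitaryGroup (Fin 2) ℂ) :
    ∃ α β γ : ℝ, M = Dm α * Rm β * Dm γ := by
  obtain ⟨hU, hdet⟩ := Matrix.mem_specialUnitaryGroup_iff.1 hM
  have h1 : M * star M = 1 := Matrix.mem_unitaryGroup_iff.1 hU
  have hadj : M * Matrix.adjugate M = 1 := by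
    rw [Matrix.mul_adjugate, hdet, one_smul]
  have hstar : star M = Matrix.adjugate M := by
    rw [← Matrix.inv_eq_right_inv h1, Matrix.inv_eq_right_inv hadj]
  rw [Matrix.adjugate_fin_two, star_fin2] at hstar
  have h11 : M 1 1 = starRingEnd ℂ (M 0 0) := by
    have h := congrFun (congrFun hstar 0) 0
    simp only [Matrix.cons_val', Matrix.cons_val_zero, Matrix.empty_val',
      Matrix.cons_val_fin_one, Matrix.of_apply] at h
    exact h.symm
  have h10 : M 1 0 = -starRingEnd ℂ (M 0 1) := by
    have h := congrFun (congrFun hstar 1) 0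
    simp only [Matrix.cons_val', Matrix.cons_val_zero, Matrix.cons_val_one, Matrix.head_cons,
      Matrix.empty_val', Matrix.cons_val_fin_one, Matrix.of_apply, Matrix.head_fin_const] at h
    linear_combination h
  set a := M 0 0 with ha
  set b := M 0 1 with hb
  have hdet2 : a * starRingEnd ℂ a + b * starRingEnd ℂ b = 1 := by
    rw [Matrix.det_fin_two, h11, h10] at hdet
    linear_combination hdet
  have hnorm : ‖a‖ ^ 2 + ‖b‖ ^ 2 = 1 := by
    rw [Complex.mul_conj, Complex.mul_conj] at hdet2
    rw [Complex.sq_norm, Complex.sq_norm]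
    exact_mod_cast hdet2
  have ha_nn : 0 ≤ ‖a‖ := norm_nonneg a
  have hb_nn : 0 ≤ ‖b‖ := norm_nonneg b
  have habs_le : ‖a‖ ≤ 1 := by nlinarith
  set β := Real.arccos (‖a‖) with hβ
  have hcos : Real.cos β = ‖a‖ := Real.cos_arccos (by linarith) habs_le
  have hsin : Real.sin β = ‖b‖ := by
    rw [hβ, Real.sin_arccos]
    rw [show 1 - ‖a‖ ^ 2 = ‖b‖ ^ 2 by linarith]
    exact Real.sqrt_sq hb_nn
  refine ⟨-((a.arg + (b.arg - Real.pi/2))/2), β, ((b.arg - Real.pi/2) - a.arg)/2, ?_⟩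
  rw [Dm, Rm, Dm, Matrix.mul_fin_two, Matrix.mul_fin_two, hcos, hsin]
  ext i j
  fin_cases i <;> fin_cases j <;>
    simp only [Fin.mk_zero, Fin.mk_one, Fin.isValue, Matrix.cons_val', Matrix.cons_val_zero,
      Matrix.cons_val_one, Matrix.head_cons, Matrix.empty_val', Matrix.cons_val_fin_one,
      Matrix.of_apply, Matrix.head_fin_const, zero_mul, mul_zero, add_zero, zero_add]
  · rw [← ha]
    exact ((entry_dd (‖a‖) (-((a.arg + (b.arg - Real.pi/2))/2))
      ((b.arg - Real.pi/2 - a.arg)/2) a.arg (by ring)).trans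
      (Complex.norm_mul_exp_arg_mul_I a)).symm
  · rw [← hb]
    exact ((entry_dr (‖b‖) (-((a.arg + (b.arg - Real.pi/2))/2))
      ((b.arg - Real.pi/2 - a.arg)/2) b.arg (by ring)).trans
      (Complex.norm_mul_exp_arg_mul_I b)).symm
  · rw [h10]
    exact ((entry_rd (‖b‖) (-((a.arg + (b.arg - Real.pi/2))/2))
      ((b.arg - Real.pi/2 - a.arg)/2) b.arg (by ring)).trans
      (congrArg Neg.neg (abs_mul_exp_neg_arg_mul_I b))).symm
  · rw [h11]
    exact ((entry_dd' (‖a‖) (-((a.arg + (b.arg - Real.pi/2))/2))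
      ((b.arg - Real.pi/2 - a.arg)/2) a.arg (by ring)).trans
      (abs_mul_exp_neg_arg_mul_I a)).symm

end Genus2Aux

open Genus2Aux in
/-- For irrational `θ`, there is a homomorphism `ρ : Γ₂ → SU(2)` sending `a₁, b₁` to `A(θ)`
and `a₂, b₂` to `B(θ)` whose range is dense in `SU(2)`. -/
theorem exists_dense_representation_of_genus_two_group (θ : ℝ) (hθ : Irrational θ) :
    ∃ (hA : Amat θ ∈ Matrix.specialUnitaryGroup (Fin 2) ℂ)
      (hB : Bmat θ ∈ Matrix.specialUnitaryGroup (Fin 2) ℂ)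
      (ρ : Genus2Group →* ↥(Matrix.specialUnitaryGroup (Fin 2) ℂ)),
      ρ (PresentedGroup.of (rels := genus2Rels) 0) = ⟨Amat θ, hA⟩ ∧
      ρ (PresentedGroup.of (rels := genus2Rels) 1) = ⟨Amat θ, hA⟩ ∧
      ρ (PresentedGroup.of (rels := genus2Rels) 2) = ⟨Bmat θ, hB⟩ ∧
      ρ (PresentedGroup.of (rels := genus2Rels) 3) = ⟨Bmat θ, hB⟩ ∧
      Dense (Set.range ρ) := by
  have hAeq : Amat θ = Dm (θ * Real.pi / 2) := by
    rw [Amat, Dm]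
    push_cast
    rfl
  have hBeq : Bmat θ = Rm (θ * Real.pi / 2) := rfl
  have hA : Amat θ ∈ Matrix.specialUnitaryGroup (Fin 2) ℂ := hAeq ▸ Dm_mem _
  have hB : Bmat θ ∈ Matrix.specialUnitaryGroup (Fin 2) ℂ := hBeq ▸ Rm_mem _
  refine ⟨hA, hB, ?_⟩
  set f : Fin 4 → SU2 := ![⟨Amat θ, hA⟩, ⟨Amat θ, hA⟩, ⟨Bmat θ, hB⟩, ⟨Bmat θ, hB⟩] with hf
  have hf0 : f 0 = ⟨Amat θ, hA⟩ := rfl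
  have hf1 : f 1 = ⟨Amat θ, hA⟩ := rfl
  have hf2 : f 2 = ⟨Bmat θ, hB⟩ := rfl
  have hf3 : f 3 = ⟨Bmat θ, hB⟩ := rfl
  have hrel : ∀ r ∈ genus2Rels, FreeGroup.lift f r = 1 := by
    intro r hr
    rw [genus2Rels, Set.mem_singleton_iff] at hr
    subst hr
    simp only [_root_.map_mul, _root_.map_inv, FreeGroup.lift_apply_of, hf0, hf1, hf2, hf3]
    group
  set ρ : Genus2Group →* SU2 := PresentedGroup.toGroup hrel with hρ
  have hof : ∀ x : Fin 4, ρ (PresentedGroup.of (rels := genus2Rels) x) = f x := fun x =>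
    PresentedGroup.toGroup.of hrel
  refine ⟨ρ, hof 0, hof 1, hof 2, hof 3, ?_⟩
  -- density
  have hA' : (⟨Amat θ, hA⟩ : SU2) = dsu (θ * Real.pi / 2) := Subtype.ext hAeq
  have hB' : (⟨Bmat θ, hB⟩ : SU2) = rsu (θ * Real.pi / 2) := Subtype.ext hBeq
  have hdense := dense_aux hθ
  have hmem_d : ∀ s ∈ (AddSubgroup.closure {θ * Real.pi / 2, 2 * Real.pi} : Set ℝ),
      dsu s ∈ Set.range ρ := by
    intro s hs
    rw [SetLike.mem_coe, AddSubgroup.mem_closure_pair] at hs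
    obtain ⟨m, n, hmn⟩ := hs
    have h1 : dsu (m • (θ * Real.pi / 2)) * dsu (n • (2 * Real.pi)) = dsu s := by
      rw [dsu_mul, hmn]
    have h2 : dsu (n • (2 * Real.pi)) = 1 := by
      rw [dsu_zsmul, dsu_two_pi, _root_.one_zpow]
    refine ⟨_, (map_zpow ρ (PresentedGroup.of (rels := genus2Rels) 0) m).trans
      ((congrArg (· ^ m) (hof 0)).trans ?_)⟩
    rw [hf0, hA', ← dsu_zsmul, ← h1, h2, mul_one]
  have hmem_r : ∀ s ∈ (AddSubgroup.closure {θ * Real.pi / 2, 2 * Real.pi} : Set ℝ),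
      rsu s ∈ Set.range ρ := by
    intro s hs
    rw [SetLike.mem_coe, AddSubgroup.mem_closure_pair] at hs
    obtain ⟨m, n, hmn⟩ := hs
    have h1 : rsu (m • (θ * Real.pi / 2)) * rsu (n • (2 * Real.pi)) = rsu s := by
      rw [rsu_mul, hmn]
    have h2 : rsu (n • (2 * Real.pi)) = 1 := by
      rw [rsu_zsmul, rsu_two_pi, _root_.one_zpow]
    refine ⟨_, (map_zpow ρ (PresentedGroup.of (rels := genus2Rels) 2) m).trans
      ((congrArg (· ^ m) (hof 2)).trans ?_)⟩
    rw [hf2, hB', ← rsu_zsmul, ← h1, h2, mul_one]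
  have hd_closure : ∀ α : ℝ, dsu α ∈ closure (Set.range ρ) := fun α =>
    map_mem_closure continuous_dsu (hdense α) hmem_d
  have hr_closure : ∀ β : ℝ, rsu β ∈ closure (Set.range ρ) := fun β =>
    map_mem_closure continuous_rsu (hdense β) hmem_r
  have hmulc : ∀ x y : SU2, x ∈ closure (Set.range ρ) → y ∈ closure (Set.range ρ) →
      x * y ∈ closure (Set.range ρ) := by
    intro x y hx hy
    refine map_mem_closure₂ continuous_mul hx hy ?_
    rintro p ⟨u, rfl⟩ q ⟨v, rfl⟩
    exact ⟨u * v, map_mul ρ u v⟩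
  intro g
  obtain ⟨α, β, γ, hg⟩ := euler g.1 g.2
  have hgeq : g = dsu α * rsu β * dsu γ := Subtype.ext (by rw [hg]; rfl)
  rw [hgeq]
  exact hmulc _ _ (hmulc _ _ (hd_closure α) (hr_closure β)) (hd_closure γ)
end

section
/- Let Ω be a compact metric space equipped with its Borel σ-algebra, let μ be a Borel probability measure on Ω, and let ψ : Ω → Ω be a measurable map that preserves μ. Suppose that for every continuous function f : Ω → ℝ and every a ∈ ℝ, the set { x ∈ Ω : limsup_{j→∞} (1/j) ∑_{i=0}^{j−1} f(ψ^i(x)) ≤ a } has μ-measure either 0 or 1. Then ψ is ergodic with respect to μ, i.e. every measurable set E with ψ⁻¹(E) = E satisfies μ(E) = 0 or μ(E) = 1. -/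
open MeasureTheory Filter Set

namespace BirkhoffAux

variable {Ω : Type*} [MeasurableSpace Ω] {μ : Measure Ω} {ψ : Ω → Ω}

/-- Birkhoff sums. -/
noncomputable def birkS (ψ : Ω → Ω) (h : Ω → ℝ) (n : ℕ) (x : Ω) : ℝ :=
  ∑ i ∈ Finset.range n, h (ψ^[i] x)

/-- Running maximum of Birkhoff sums up to `N` (including the empty sum `0`). -/
noncomputable def birkM (ψ : Ω → Ω) (h : Ω → ℝ) (N : ℕ) (x : Ω) : ℝ :=
  (Finset.range (N + 1)).sup' Finset.nonempty_range_add_one (fun n => birkS ψ h n x)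

lemma birkS_zero (h : Ω → ℝ) (x : Ω) : birkS ψ h 0 x = 0 := by simp [birkS]

lemma birkS_succ (h : Ω → ℝ) (n : ℕ) (x : Ω) :
    birkS ψ h (n + 1) x = h x + birkS ψ h n (ψ x) := by
  unfold birkS
  rw [Finset.sum_range_succ']
  simp [Function.iterate_succ_apply, add_comm]

lemma birkM_nonneg (h : Ω → ℝ) (N : ℕ) (x : Ω) : 0 ≤ birkM ψ h N x := by
  have h0 : birkS ψ h 0 x ≤ birkM ψ h N x :=
    Finset.le_sup' (fun n => birkS ψ h n x)
      (Finset.mem_range.2 (Nat.succ_pos N) : 0 ∈ Finset.range (N + 1))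
  rwa [birkS_zero] at h0

lemma birkS_le_birkM (h : Ω → ℝ) {n N : ℕ} (hn : n ≤ N) (x : Ω) :
    birkS ψ h n x ≤ birkM ψ h N x :=
  Finset.le_sup' (fun n => birkS ψ h n x) (Finset.mem_range.2 (Nat.lt_succ_of_le hn))

lemma birkM_mono (h : Ω → ℝ) {N M : ℕ} (hNM : N ≤ M) (x : Ω) :
    birkM ψ h N x ≤ birkM ψ h M x :=
  Finset.sup'_mono _ (Finset.range_subset_range.2 (by omega)) Finset.nonempty_range_add_one

lemma birkS_measurable (hψ : Measurable ψ) {h : Ω → ℝ} (hm : Measurable h) (n : ℕ) :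
    Measurable (birkS ψ h n) :=
  Finset.measurable_sum _ (fun i _ => hm.comp (hψ.iterate i))

lemma birkM_measurable (hψ : Measurable ψ) {h : Ω → ℝ} (hm : Measurable h) (N : ℕ) :
    Measurable (birkM ψ h N) := by
  have heq : birkM ψ h N =
      (Finset.range (N + 1)).sup' Finset.nonempty_range_add_one (fun n => birkS ψ h n) := by
    ext x
    simp [birkM, Finset.sup'_apply]
  rw [heq]
  exact Finset.measurable_sup' _ (fun n _ => birkS_measurable hψ hm n)

lemma birkM_bound {h : Ω → ℝ} {C : ℝ} (hC : ∀ x, |h x| ≤ C) (hC0 : 0 ≤ C) (N : ℕ) (x : Ω) :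
    |birkM ψ h N x| ≤ N * C := by
  rw [abs_le]
  constructor
  · refine le_trans ?_ (birkM_nonneg h N x)
    simp only [neg_nonpos]
    positivity
  · apply Finset.sup'_le
    intro n hn
    have hn' : n ≤ N := by simpa [Nat.lt_succ_iff] using hn
    calc birkS ψ h n x ≤ ∑ i ∈ Finset.range n, |h (ψ^[i] x)| :=
          Finset.sum_le_sum fun i _ => le_abs_self _
    _ ≤ ∑ _i ∈ Finset.range n, C := Finset.sum_le_sum fun i _ => hC _
    _ = n * C := by simp [mul_comm]
    _ ≤ N * C := by
        apply mul_le_mul_of_nonneg_right _ hC0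
        exact_mod_cast hn'

/-- The key pointwise inequality in Garsia's proof. -/
lemma birkM_key {h : Ω → ℝ} {N : ℕ} {x : Ω} (hx : 0 < birkM ψ h N x) :
    birkM ψ h N x - birkM ψ h N (ψ x) ≤ h x := by
  obtain ⟨n, hn, hmax⟩ := Finset.exists_mem_eq_sup' (Finset.nonempty_range_add_one (n := N))
    (fun n => birkS ψ h n x)
  have hn' : n ≤ N := by simpa [Nat.lt_succ_iff] using hn
  have hmax' : birkM ψ h N x = birkS ψ h n x := hmax
  rcases n with _ | m
  · rw [hmax', birkS_zero] at hx; exact absurd hx (lt_irrefl 0)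
  · have : birkM ψ h N x = h x + birkS ψ h m (ψ x) := by rw [hmax', birkS_succ]
    have hle : birkS ψ h m (ψ x) ≤ birkM ψ h N (ψ x) :=
      birkS_le_birkM h (le_trans (Nat.le_succ m) hn') (ψ x)
    linarith

/-- Garsia's maximal ergodic lemma: the integral of `h` over the set where some
Birkhoff sum is positive is nonnegative. -/
lemma maximal_ergodic [IsProbabilityMeasure μ] (hψ : MeasurePreserving ψ μ μ)
    {h : Ω → ℝ} (hm : Measurable h) {C : ℝ} (hC : ∀ x, |h x| ≤ C) (hC0 : 0 ≤ C) (N : ℕ) :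
    0 ≤ ∫ x in {x | 0 < birkM ψ h N x}, h x ∂μ := by
  set F := birkM ψ h N with hF
  have hFmeas : Measurable F := birkM_measurable hψ.measurable hm N
  set A := {x | 0 < F x} with hA
  have hAmeas : MeasurableSet A := measurableSet_lt measurable_const hFmeas
  have hFint : Integrable F μ := by
    refine ⟨hFmeas.aestronglyMeasurable, ?_⟩
    exact HasFiniteIntegral.of_bounded (C := N * C)
      (ae_of_all _ fun x => by simpa [Real.norm_eq_abs] using birkM_bound hC hC0 N x)
  have hFψmeas : Measurable (fun x => F (ψ x)) := hFmeas.comp hψ.measurable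
  have hFψint : Integrable (fun x => F (ψ x)) μ := by
    refine ⟨hFψmeas.aestronglyMeasurable, ?_⟩
    exact HasFiniteIntegral.of_bounded (C := N * C)
      (ae_of_all _ fun x => by simpa [Real.norm_eq_abs] using birkM_bound hC hC0 N (ψ x))
  have hhint : Integrable h μ := by
    refine ⟨hm.aestronglyMeasurable, ?_⟩
    exact HasFiniteIntegral.of_bounded (C := C)
      (ae_of_all _ fun x => by simpa [Real.norm_eq_abs] using hC x)
  -- ∫ F ∘ ψ = ∫ F
  have hcomp : ∫ x, F (ψ x) ∂μ = ∫ x, F x ∂μ := by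
    have hasm : AEStronglyMeasurable F (Measure.map ψ μ) := by
      rw [hψ.map_eq]; exact hFmeas.aestronglyMeasurable
    have := integral_map hψ.measurable.aemeasurable hasm
    rw [hψ.map_eq] at this
    exact this.symm
  have htot : ∫ x, (F x - F (ψ x)) ∂μ = 0 := by
    rw [integral_sub hFint hFψint, hcomp, sub_self]
  have hGint : Integrable (fun x => F x - F (ψ x)) μ := hFint.sub hFψint
  have hsplit : ∫ x in A, (F x - F (ψ x)) ∂μ + ∫ x in Aᶜ, (F x - F (ψ x)) ∂μ = 0 := by
    rw [integral_add_compl hAmeas hGint]; exact htot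
  have hcompl_nonpos : ∫ x in Aᶜ, (F x - F (ψ x)) ∂μ ≤ 0 := by
    apply setIntegral_nonpos hAmeas.compl
    intro x hx
    have h1 : ¬ 0 < F x := hx
    have h2 : F x = 0 := le_antisymm (not_lt.1 h1) (birkM_nonneg h N x)
    have h3 : 0 ≤ F (ψ x) := birkM_nonneg h N (ψ x)
    linarith
  have hA_nonneg : 0 ≤ ∫ x in A, (F x - F (ψ x)) ∂μ := by linarith
  calc (0:ℝ) ≤ ∫ x in A, (F x - F (ψ x)) ∂μ := hA_nonneg
    _ ≤ ∫ x in A, h x ∂μ := by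
        apply setIntegral_mono_on (hGint.integrableOn) (hhint.integrableOn) hAmeas
        intro x hx
        exact birkM_key hx


/-- Maximal ergodic inequality. -/
lemma maximal_measure_bound [IsProbabilityMeasure μ] (hψ : MeasurePreserving ψ μ μ)
    {g : Ω → ℝ} (hg : Measurable g) (hgb : ∀ x, |g x| ≤ 1)
    {α ε : ℝ} (hα : 0 < α) (hεnn : 0 ≤ ε) (hε : ∫ x, |g x| ∂μ ≤ ε) :
    μ {x | ∃ n : ℕ, α * n < ∑ i ∈ Finset.range n, |g (ψ^[i] x)|}
      ≤ ENNReal.ofReal (ε / α) := by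
  set h : Ω → ℝ := fun x => |g x| - α with hh
  have hm : Measurable h := hg.abs.sub measurable_const
  have hC : ∀ x, |h x| ≤ 1 + α := by
    intro x
    have h1 := hgb x
    have h2 := abs_nonneg (g x)
    rw [hh, abs_le]
    constructor <;> simp only [] <;> [linarith; linarith]
  have hC0 : (0:ℝ) ≤ 1 + α := by linarith
  have hbirkS : ∀ n x, birkS ψ h n x
      = (∑ i ∈ Finset.range n, |g (ψ^[i] x)|) - n * α := by
    intro n x
    unfold birkS
    rw [hh]
    rw [Finset.sum_sub_distrib, Finset.sum_const, Finset.card_range, nsmul_eq_mul]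
  have hgabs_int : Integrable (fun x => |g x|) μ :=
    ⟨hg.abs.aestronglyMeasurable, HasFiniteIntegral.of_bounded (C := 1)
      (ae_of_all _ fun x => by simpa [Real.norm_eq_abs, abs_abs] using hgb x)⟩
  -- per-N bound
  have hboundN : ∀ N : ℕ, μ {x | 0 < birkM ψ h N x} ≤ ENNReal.ofReal (ε / α) := by
    intro N
    set A := {x | 0 < birkM ψ h N x} with hA
    have hAmeas : MeasurableSet A :=
      measurableSet_lt measurable_const (birkM_measurable hψ.measurable hm N)
    have hkey : 0 ≤ ∫ x in A, h x ∂μ := maximal_ergodic hψ hm hC hC0 N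
    have hsplit : ∫ x in A, h x ∂μ
        = (∫ x in A, |g x| ∂μ) - α * (μ A).toReal := by
      rw [hh]
      rw [integral_sub (hgabs_int.integrableOn) (integrableOn_const (measure_ne_top μ A))]
      rw [setIntegral_const]
      simp [smul_eq_mul, mul_comm, Measure.real]
    have hle : α * (μ A).toReal ≤ ε := by
      have h1 : ∫ x in A, |g x| ∂μ ≤ ∫ x, |g x| ∂μ :=
        setIntegral_le_integral hgabs_int (ae_of_all _ fun x => abs_nonneg _)
      linarith [hkey, hsplit ▸ hkey]
    have htoReal : (μ A).toReal ≤ ε / α := by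
      rw [le_div_iff₀ hα]; linarith [hle]
    calc μ A = ENNReal.ofReal ((μ A).toReal) := (ENNReal.ofReal_toReal (measure_ne_top μ A)).symm
      _ ≤ ENNReal.ofReal (ε / α) := ENNReal.ofReal_le_ofReal htoReal
  -- the union
  have hUeq : {x | ∃ n : ℕ, α * n < ∑ i ∈ Finset.range n, |g (ψ^[i] x)|}
      = ⋃ N : ℕ, {x | 0 < birkM ψ h N x} := by
    ext x
    simp only [Set.mem_setOf_eq, Set.mem_iUnion]
    constructor
    · rintro ⟨n, hn⟩
      refine ⟨n, lt_of_lt_of_le ?_ (birkS_le_birkM h le_rfl x)⟩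
      rw [hbirkS]
      linarith
    · rintro ⟨N, hN⟩
      obtain ⟨n, hn, hmax⟩ := Finset.exists_mem_eq_sup' (Finset.nonempty_range_add_one (n := N))
        (fun n => birkS ψ h n x)
      have hmax' : birkM ψ h N x = birkS ψ h n x := hmax
      rw [hmax', hbirkS] at hN
      exact ⟨n, by linarith⟩
  rw [hUeq]
  have hmono : Monotone (fun N : ℕ => {x | 0 < birkM ψ h N x}) := by
    intro N M hNM x hx
    exact lt_of_lt_of_le hx (birkM_mono h hNM x)
  have htend := tendsto_measure_iUnion_atTop (μ := μ) hmono
  exact le_of_tendsto htend (Eventually.of_forall hboundN)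

/-- Continuous approximation of the indicator of a measurable set in `L¹`. -/
lemma approx_indicator {Ω : Type*} [MetricSpace Ω] [CompactSpace Ω] [MeasurableSpace Ω]
    [BorelSpace Ω] (μ : Measure Ω) [IsProbabilityMeasure μ] {s : Set Ω}
    (hs : MeasurableSet s) {ε : ℝ} (hε : 0 < ε) :
    ∃ f : C(Ω, ℝ), (∀ x, f x ∈ Icc (0:ℝ) 1) ∧
      ∫ x, |f x - s.indicator 1 x| ∂μ ≤ ε := by
  have h2 : (0:ℝ) < ε / 2 := by linarith
  have h2' : ENNReal.ofReal (ε / 2) ≠ 0 := by simp [ENNReal.ofReal_pos.2 h2, (ENNReal.ofReal_pos.2 h2).ne']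
  obtain ⟨K, hKs, hKclosed, hK⟩ :=
    hs.exists_isClosed_diff_lt (measure_ne_top μ s) h2'
  obtain ⟨U, hsU, hUopen, hUfin, hU⟩ :=
    hs.exists_isOpen_diff_lt (measure_ne_top μ s) h2'
  obtain ⟨f, hf0, hf1, hf01⟩ := exists_continuous_zero_one_of_isClosed
    hUopen.isClosed_compl hKclosed (disjoint_compl_left_iff.2 (hKs.trans hsU))
  refine ⟨f, hf01, ?_⟩
  have hUKmeas : MeasurableSet (U \ K) := hUopen.measurableSet.diff hKclosed.measurableSet
  have hptwise : ∀ x, |f x - s.indicator 1 x| ≤ (U \ K).indicator 1 x := by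
    intro x
    by_cases hxK : x ∈ K
    · have hfx : f x = 1 := hf1 hxK
      have hxs : x ∈ s := hKs hxK
      rw [hfx, Set.indicator_of_mem hxs]
      simp only [Pi.one_apply, sub_self, abs_zero]
      exact Set.indicator_nonneg (fun _ _ => zero_le_one) x
    · by_cases hxU : x ∈ U
      · have hmem : x ∈ U \ K := ⟨hxU, hxK⟩
        rw [Set.indicator_of_mem hmem]
        have := hf01 x
        by_cases hxs : x ∈ s
        · rw [Set.indicator_of_mem hxs, abs_le]
          simp only [Pi.one_apply]
          constructor <;> [linarith [this.1, this.2]; linarith [this.1, this.2]]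
        · rw [Set.indicator_of_notMem hxs, abs_le]
          simp only [Pi.one_apply]
          constructor <;> [linarith [this.1, this.2]; linarith [this.1, this.2]]
      · have hfx : f x = 0 := hf0 (by simpa using hxU)
        have hxs : x ∉ s := fun hc => hxU (hsU hc)
        rw [hfx, Set.indicator_of_notMem hxs]
        simp only [Pi.zero_apply, sub_zero, abs_zero]
        exact Set.indicator_nonneg (fun _ _ => zero_le_one) x
  have hind_int : Integrable ((U \ K).indicator (1 : Ω → ℝ)) μ :=
    (integrable_const 1).indicator hUKmeas
  have hlhs_meas : Measurable fun x => |f x - s.indicator 1 x| :=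
    (f.continuous.measurable.sub (measurable_const.indicator hs)).abs
  have hlhs_int : Integrable (fun x => |f x - s.indicator 1 x|) μ :=
    ⟨hlhs_meas.aestronglyMeasurable, HasFiniteIntegral.of_bounded (C := 2)
      (ae_of_all _ fun x => by
        rw [Real.norm_eq_abs, abs_abs]
        have h1 := (hf01 x).1
        have h2 := (hf01 x).2
        by_cases hxs : x ∈ s
        · rw [Set.indicator_of_mem hxs, abs_le]; simp only [Pi.one_apply]
          constructor <;> linarith
        · rw [Set.indicator_of_notMem hxs, abs_le]
          constructor <;> simp <;> linarith)⟩
  calc ∫ x, |f x - s.indicator 1 x| ∂μ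
      ≤ ∫ x, (U \ K).indicator 1 x ∂μ := integral_mono hlhs_int hind_int hptwise
    _ = (μ (U \ K)).toReal := integral_indicator_one hUKmeas
    _ ≤ ε := by
        apply ENNReal.toReal_le_of_le_ofReal hε.le
        calc μ (U \ K) ≤ μ ((U \ s) ∪ (s \ K)) := by
              apply measure_mono
              intro x hx
              by_cases hxs : x ∈ s
              · exact Or.inr ⟨hxs, fun hc => hx.2 hc⟩
              · exact Or.inl ⟨hx.1, hxs⟩
          _ ≤ μ (U \ s) + μ (s \ K) := measure_union_le _ _
          _ ≤ ENNReal.ofReal (ε / 2) + ENNReal.ofReal (ε / 2) :=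
              add_le_add hU.le hK.le
          _ = ENNReal.ofReal ε := by
              rw [← ENNReal.ofReal_add h2.le h2.le]; norm_num

end BirkhoffAux
open BirkhoffAux in
/-- Ergodicity criterion via Birkhoff averages: if, for every continuous observable `f`
and every level `a`, the sublevel set of the limsup of the Birkhoff averages of `f`
has measure `0` or `1`, then the measure-preserving map `ψ` is ergodic. -/
theorem ergodic_of_birkhoff_sublevel_trivial
    {Ω : Type*} [MetricSpace Ω] [CompactSpace Ω]
    [MeasurableSpace Ω] [BorelSpace Ω]
    (μ : Measure Ω) [IsProbabilityMeasure μ]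
    (ψ : Ω → Ω) (hψ : MeasurePreserving ψ μ μ)
    (h : ∀ (f : C(Ω, ℝ)) (a : ℝ),
      μ {x : Ω | limsup
          (fun j : ℕ => (1 / (j : ℝ)) * ∑ i ∈ Finset.range j, f (ψ^[i] x)) atTop ≤ a}
        = 0 ∨
      μ {x : Ω | limsup
          (fun j : ℕ => (1 / (j : ℝ)) * ∑ i ∈ Finset.range j, f (ψ^[i] x)) atTop ≤ a}
        = 1) :
    Ergodic ψ μ := by
  refine ⟨hψ, ⟨fun s hsm hsinv => ?_⟩⟩
  rw [eventuallyConst_set']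
  by_contra hcon
  push_neg at hcon
  obtain ⟨h0, h1⟩ := hcon
  rw [ae_eq_empty] at h0
  rw [ae_eq_univ] at h1
  -- both `s` and `sᶜ` have positive measure
  set m := (μ s).toReal with hmdef
  set m' := (μ sᶜ).toReal with hm'def
  have hm : 0 < m := ENNReal.toReal_pos h0 (measure_ne_top μ s)
  have hm' : 0 < m' := ENNReal.toReal_pos h1 (measure_ne_top μ sᶜ)
  have hminpos : 0 < min m m' := lt_min hm hm'
  set ε : ℝ := min m m' / 8 with hεdef
  have hεpos : 0 < ε := by positivity
  obtain ⟨f, hf01, hfint⟩ := approx_indicator μ hsm hεpos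
  set g : Ω → ℝ := fun x => f x - s.indicator 1 x with hgdef
  have hgmeas : Measurable g := f.continuous.measurable.sub (measurable_const.indicator hsm)
  have hgb : ∀ x, |g x| ≤ 1 := by
    intro x
    have hx1 := (hf01 x).1
    have hx2 := (hf01 x).2
    show |f x - s.indicator 1 x| ≤ 1
    by_cases hxs : x ∈ s
    · rw [Set.indicator_of_mem hxs, abs_le]
      simp only [Pi.one_apply]
      constructor <;> linarith
    · rw [Set.indicator_of_notMem hxs, abs_le]
      constructor <;> simp only [sub_zero] <;> linarith
  set Bad := {x | ∃ n : ℕ, (1/4 : ℝ) * n < ∑ i ∈ Finset.range n, |g (ψ^[i] x)|} with hBaddef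
  have hBadmeas : MeasurableSet Bad := by
    have : Bad = ⋃ n : ℕ, {x | (1/4 : ℝ) * n < ∑ i ∈ Finset.range n, |g (ψ^[i] x)|} := by
      ext x; simp [hBaddef]
    rw [this]
    exact MeasurableSet.iUnion fun n => measurableSet_lt measurable_const
      (Finset.measurable_sum _ fun i _ => (hgmeas.comp (hψ.measurable.iterate i)).abs)
  have hBadbound : μ Bad ≤ ENNReal.ofReal (ε / (1/4)) :=
    maximal_measure_bound hψ hgmeas hgb (by norm_num) hεpos.le hfint
  have hquarter : ε / (1/4 : ℝ) = min m m' / 2 := by rw [hεdef]; ring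
  have hBads : μ Bad < μ s := by
    refine lt_of_le_of_lt hBadbound ?_
    rw [hquarter, ← ENNReal.ofReal_toReal (measure_ne_top μ s), ← hmdef]
    rw [ENNReal.ofReal_lt_ofReal_iff hm]
    have := min_le_left m m'
    linarith
  have hBads' : μ Bad < μ sᶜ := by
    refine lt_of_le_of_lt hBadbound ?_
    rw [hquarter, ← ENNReal.ofReal_toReal (measure_ne_top μ sᶜ), ← hm'def]
    rw [ENNReal.ofReal_lt_ofReal_iff hm']
    have := min_le_right m m'
    linarith
  -- invariance of `s` along the orbit
  have hstep : ∀ x, (ψ x ∈ s ↔ x ∈ s) := fun x => Set.ext_iff.mp hsinv x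
  have hiter : ∀ (i : ℕ) (x : Ω), (ψ^[i] x ∈ s ↔ x ∈ s) := by
    intro i
    induction i with
    | zero => intro x; simp
    | succ n ih =>
        intro x
        rw [Function.iterate_succ_apply]
        exact (ih (ψ x)).trans (hstep x)
  -- the key bound off the bad set
  have hgood : ∀ x ∉ Bad, ∀ n : ℕ, 1 ≤ n →
      |(1 / (n : ℝ)) * ∑ i ∈ Finset.range n, f (ψ^[i] x) - s.indicator 1 x| ≤ 1/4 := by
    intro x hx n hn
    have hnpos : (0:ℝ) < n := by exact_mod_cast hn
    have hindconst : ∀ i : ℕ, s.indicator (1 : Ω → ℝ) (ψ^[i] x) = s.indicator 1 x := by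
      intro i
      by_cases hxs : x ∈ s
      · rw [Set.indicator_of_mem ((hiter i x).2 hxs), Set.indicator_of_mem hxs]
        simp
      · rw [Set.indicator_of_notMem (fun hc => hxs ((hiter i x).1 hc)),
          Set.indicator_of_notMem hxs]
    have hsum : ∑ i ∈ Finset.range n, f (ψ^[i] x)
        = n * s.indicator 1 x + ∑ i ∈ Finset.range n, g (ψ^[i] x) := by
      have : ∀ i : ℕ, f (ψ^[i] x) = s.indicator 1 (ψ^[i] x) + g (ψ^[i] x) := by
        intro i; rw [hgdef]; ring
      rw [Finset.sum_congr rfl (fun i _ => this i), Finset.sum_add_distrib]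
      congr 1
      rw [Finset.sum_congr rfl (fun i _ => hindconst i), Finset.sum_const,
        Finset.card_range, nsmul_eq_mul]
    have hxn : ¬ ((1/4 : ℝ) * n < ∑ i ∈ Finset.range n, |g (ψ^[i] x)|) :=
      fun hc => hx ⟨n, hc⟩
    have habs : |∑ i ∈ Finset.range n, g (ψ^[i] x)| ≤ (n : ℝ) / 4 := by
      calc |∑ i ∈ Finset.range n, g (ψ^[i] x)|
          ≤ ∑ i ∈ Finset.range n, |g (ψ^[i] x)| := Finset.abs_sum_le_sum_abs _ _
        _ ≤ 1/4 * n := not_lt.1 hxn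
        _ = (n : ℝ) / 4 := by ring
    have heq : (1 / (n : ℝ)) * ∑ i ∈ Finset.range n, f (ψ^[i] x) - s.indicator 1 x
        = (1 / (n : ℝ)) * ∑ i ∈ Finset.range n, g (ψ^[i] x) := by
      rw [hsum]
      field_simp
      ring
    rw [heq, abs_mul, abs_of_nonneg (by positivity : (0:ℝ) ≤ 1 / (n : ℝ))]
    calc (1 / (n : ℝ)) * |∑ i ∈ Finset.range n, g (ψ^[i] x)|
        ≤ (1 / (n : ℝ)) * ((n : ℝ) / 4) := by
          apply mul_le_mul_of_nonneg_left habs (by positivity)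
      _ = 1/4 := by field_simp
  -- bounds on the Birkhoff averages of `f`
  set u : Ω → ℕ → ℝ :=
    fun x j => (1 / (j : ℝ)) * ∑ i ∈ Finset.range j, f (ψ^[i] x) with hudef
  have hu0 : ∀ x j, 0 ≤ u x j := by
    intro x j
    apply mul_nonneg (by positivity)
    exact Finset.sum_nonneg fun i _ => (hf01 _).1
  have hu1 : ∀ x j, u x j ≤ 1 := by
    intro x j
    rcases Nat.eq_zero_or_pos j with hj | hj
    · simp [hudef, hj]
    · have hjpos : (0:ℝ) < j := by exact_mod_cast hj
      rw [hudef]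
      have hsle : ∑ i ∈ Finset.range j, f (ψ^[i] x) ≤ (j : ℝ) := by
        calc ∑ i ∈ Finset.range j, f (ψ^[i] x) ≤ ∑ _i ∈ Finset.range j, (1:ℝ) :=
              Finset.sum_le_sum fun i _ => (hf01 _).2
          _ = (j : ℝ) := by simp
      calc (1 / (j : ℝ)) * ∑ i ∈ Finset.range j, f (ψ^[i] x)
          ≤ (1 / (j : ℝ)) * (j : ℝ) := mul_le_mul_of_nonneg_left hsle (by positivity)
        _ = 1 := by field_simp
  have hbdd : ∀ x, IsBoundedUnder (· ≤ ·) atTop (u x) :=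
    fun x => isBoundedUnder_of ⟨1, hu1 x⟩
  have hcobdd : ∀ x, IsCoboundedUnder (· ≤ ·) atTop (u x) :=
    fun x => (isBoundedUnder_of ⟨0, hu0 x⟩ :
      IsBoundedUnder (· ≥ ·) atTop (u x)).isCoboundedUnder_le
  -- conclude with the hypothesis applied at level 1/2
  have claim1 : ∀ x ∉ Bad, x ∈ s → ¬ (limsup (u x) atTop ≤ 1/2) := by
    intro x hxB hxs hc
    have hfreq : ∃ᶠ j in atTop, (3/4 : ℝ) ≤ u x j := by
      apply Eventually.frequently
      filter_upwards [eventually_ge_atTop 1] with j hj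
      have := hgood x hxB j hj
      rw [Set.indicator_of_mem hxs] at this
      have h' := abs_le.1 this
      simp only [Pi.one_apply] at h'
      have := h'.1
      rw [hudef]
      simp only []
      linarith
    have := le_limsup_of_frequently_le hfreq (hbdd x)
    linarith
  have claim2 : ∀ x ∉ Bad, x ∉ s → limsup (u x) atTop ≤ 1/2 := by
    intro x hxB hxs
    apply limsup_le_of_le (hcobdd x)
    filter_upwards [eventually_ge_atTop 1] with j hj
    have := hgood x hxB j hj
    rw [Set.indicator_of_notMem hxs, sub_zero] at this
    have h' := abs_le.1 this
    rw [hudef]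
    simp only []
    linarith [h'.2]
  rcases h f (1/2) with hS | hS
  · -- sublevel set has measure 0, but it contains `sᶜ \ Bad`
    have hsub : sᶜ \ Bad ⊆ {x : Ω | limsup
        (fun j : ℕ => (1 / (j : ℝ)) * ∑ i ∈ Finset.range j, f (ψ^[i] x)) atTop ≤ 1/2} :=
      fun x hx => claim2 x hx.2 hx.1
    have hzero : μ (sᶜ \ Bad) = 0 := measure_mono_null hsub hS
    have hpos : 0 < μ (sᶜ \ Bad) :=
      lt_of_lt_of_le (tsub_pos_of_lt hBads') le_measure_diff
    exact absurd hzero hpos.ne'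
  · -- sublevel set has measure 1, but it is disjoint from `s \ Bad`
    have hsub : ∀ x ∈ s \ Bad, x ∉ {x : Ω | limsup
        (fun j : ℕ => (1 / (j : ℝ)) * ∑ i ∈ Finset.range j, f (ψ^[i] x)) atTop ≤ 1/2} :=
      fun x hx hc => claim1 x hx.2 hx.1 hc
    have hdisj : Disjoint (s \ Bad) {x : Ω | limsup
        (fun j : ℕ => (1 / (j : ℝ)) * ∑ i ∈ Finset.range j, f (ψ^[i] x)) atTop ≤ 1/2} :=
      Set.disjoint_left.2 fun x hx hc => hsub x hx hc
    have hmeas : MeasurableSet (s \ Bad) := hsm.diff hBadmeas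
    have hunion := measure_union' (μ := μ) hdisj hmeas
    have hle1 : μ ((s \ Bad) ∪ {x : Ω | limsup
        (fun j : ℕ => (1 / (j : ℝ)) * ∑ i ∈ Finset.range j, f (ψ^[i] x)) atTop ≤ 1/2}) ≤ 1 :=
      prob_le_one
    rw [hunion, hS] at hle1
    have hpos : 0 < μ (s \ Bad) :=
      lt_of_lt_of_le (tsub_pos_of_lt hBads) le_measure_diff
    have : μ (s \ Bad) ≤ 0 := by
      have h11 : μ (s \ Bad) + 1 ≤ 0 + 1 := by simpa using hle1
      exact (ENNReal.add_le_add_iff_right ENNReal.one_ne_top).1 h11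
    exact absurd (le_antisymm this zero_le) hpos.ne'
end
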